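/- arXiv:2407.07282 — 3 statements merged into one kernel-verified Lean document; each statement's English description precedes it below -/
import Mathlib

section
/- For two p×n complex matrices A and B and any nonnegative integers i, j, the singular values satisfy s_{i+j+1}(A + B) ≤ s_{i+1}(A) + s_{j+1}(B). -/
/-!
Weyl's argument through the Courant–Fischer subspaces. The eigenvectors of `(A + B)ᴴ (A + B)`
for its `i + j + 1` largest eigenvalues span a subspace on which `‖(A + B) x‖ ≥ s_{i+j+1} ‖x‖`;
the eigenvectors of `Aᴴ A` for all but its `i` largest eigenvalues span a subspace of codimension
at most `i` on which `‖A x‖ ≤ s_{i+1} ‖x‖`, and likewise for `B` and `j`. Three such subspaces of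
`ℂⁿ` share a nonzero vector `x`, and the triangle inequality at `x` gives the claim.
-/

open scoped BigOperators

/-- The `k`-th largest value (1-indexed) of a finite family of reals, `0` if `k` is out of range. -/
noncomputable def kthLargest {m : ℕ} (v : Fin m → ℝ) (k : ℕ) : ℝ :=
  sSup {t : ℝ | k ≤ (Finset.univ.filter (fun i => t ≤ v i)).card}

/-- The `k`-th largest singular value (1-indexed) of a complex matrix, `0` beyond the rank range. -/
noncomputable def sv {m n : ℕ} (M : Matrix (Fin m) (Fin n) ℂ) (k : ℕ) : ℝ :=
  Real.sqrt (kthLargest (Matrix.isHermitian_conjTranspose_mul_self M).eigenvalues k)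

/-- The `k`-th largest singular value (1-indexed) of a real matrix. -/
noncomputable def svR {m n : ℕ} (M : Matrix (Fin m) (Fin n) ℝ) (k : ℕ) : ℝ :=
  Real.sqrt (kthLargest (Matrix.isHermitian_conjTranspose_mul_self M).eigenvalues k)

open Classical in
/-- The `k`-th largest eigenvalue (1-indexed) of a Hermitian matrix (junk value `0` otherwise). -/
noncomputable def eigH {n : ℕ} {𝕜 : Type*} [RCLike 𝕜] (M : Matrix (Fin n) (Fin n) 𝕜) (k : ℕ) : ℝ :=
  if h : M.IsHermitian then kthLargest h.eigenvalues k else 0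

section kthLargest

open Finset

variable {m : ℕ} (v : Fin m → ℝ) {k : ℕ}

theorem kthLargest_eq_zero_of_lt (hk : m < k) : kthLargest v k = 0 := by
  have : {t : ℝ | k ≤ #{i | t ≤ v i}} = ∅ :=
    Set.eq_empty_of_forall_notMem fun t ht => by
      have := card_filter_le univ fun i => t ≤ v i
      simp only [Set.mem_ofPred_eq, card_univ, Fintype.card_fin] at ht this
      omega
  rw [kthLargest, this, Real.sSup_empty]

theorem bddAbove_kthLargest_set (hk : 1 ≤ k) : BddAbove {t : ℝ | k ≤ #{i | t ≤ v i}} := by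
  refine ⟨⨆ i, v i, fun t ht => ?_⟩
  obtain ⟨i, hi⟩ := card_pos.mp (lt_of_lt_of_le hk ht)
  exact (mem_filter.mp hi).2.trans (le_ciSup (Set.finite_range v).bddAbove i)

theorem le_card_filter_kthLargest_le (hk : 1 ≤ k) (hkm : k ≤ m) : k ≤ #{i | kthLargest v k ≤ v i} := by
  have hne : (univ : Finset (Fin m)).Nonempty := univ_nonempty_iff.mpr ⟨⟨0, by omega⟩⟩
  have hmin : univ.inf' hne v ∈ {t : ℝ | k ≤ #{i | t ≤ v i}} := by
    rw [Set.mem_ofPred_eq, filter_true_of_mem fun i _ => inf'_le v (mem_univ i), card_univ,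
      Fintype.card_fin]
    exact hkm
  by_cases hbelow : ({i | v i < kthLargest v k} : Finset (Fin m)).Nonempty
  · obtain ⟨t, ht, hlt⟩ := exists_lt_of_lt_csSup ⟨_, hmin⟩
      ((sup'_lt_iff hbelow).mpr fun i hi => (mem_filter.mp hi).2)
    refine le_trans ht (card_le_card fun i hi => ?_)
    simp only [mem_filter, mem_univ, true_and] at hi ⊢
    by_contra! hvi
    exact (hlt.trans_le hi).not_ge (le_sup' v (mem_filter.mpr ⟨mem_univ i, hvi⟩))
  · simp only [not_nonempty_iff_eq_empty, filter_eq_empty_iff, mem_univ, true_implies,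
      not_lt] at hbelow
    simpa [hbelow] using hkm

theorem card_filter_kthLargest_lt_lt (hk : 1 ≤ k) : #{i | kthLargest v k < v i} < k := by
  by_contra! h
  have hne : ({i | kthLargest v k < v i} : Finset (Fin m)).Nonempty :=
    card_pos.mp (lt_of_lt_of_le hk h)
  have hlt : kthLargest v k < _ := (lt_inf'_iff hne).mpr fun i hi => (mem_filter.mp hi).2
  refine hlt.not_ge (le_csSup (bddAbove_kthLargest_set v hk) (h.trans (card_le_card ?_)))
  exact fun i hi => mem_filter.mpr ⟨mem_univ i, inf'_le v hi⟩

end kthLargest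

namespace OrthonormalBasis

variable {ι 𝕜 E : Type*} [Fintype ι] [RCLike 𝕜] [NormedAddCommGroup E] [InnerProductSpace 𝕜 E]
  (b : OrthonormalBasis ι 𝕜 E) (p : ι → Prop)

theorem finrank_span_range_subtype [DecidablePred p] :
    Module.finrank 𝕜 (Submodule.span 𝕜 (Set.range fun i : Subtype p => b i)) =
      Fintype.card (Subtype p) :=
  finrank_span_eq_card (b.orthonormal.linearIndependent.comp _ Subtype.val_injective)

theorem repr_eq_zero_of_mem_span_range_subtype {x : E}
    (hx : x ∈ Submodule.span 𝕜 (Set.range fun i : Subtype p => b i)) {j : ι} (hj : ¬ p j) :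
    b.repr x j = 0 := by
  have hle : Submodule.span 𝕜 (Set.range fun i : Subtype p => b i) ≤
      LinearMap.ker (innerSL 𝕜 (b j)).toLinearMap := by
    rw [Submodule.span_le]
    rintro _ ⟨i, rfl⟩
    exact b.orthonormal.2 fun h => hj (h ▸ i.2)
  simpa [b.repr_apply_apply] using hle hx

theorem norm_sq_eq_sum (x : E) : ‖x‖ ^ 2 = ∑ i, ‖b.repr x i‖ ^ 2 := by
  rw [← b.repr.norm_map x, EuclideanSpace.norm_sq_eq]

end OrthonormalBasis

open scoped InnerProductSpace Matrix

namespace Matrix.IsHermitian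

section

variable {ι 𝕜 : Type*} [Fintype ι] [DecidableEq ι] [RCLike 𝕜] {H : Matrix ι ι 𝕜}
  (hH : H.IsHermitian)

theorem repr_toEuclideanLin (x : EuclideanSpace 𝕜 ι) (i : ι) :
    hH.eigenvectorBasis.repr (toEuclideanLin H x) i =
      hH.eigenvalues i * hH.eigenvectorBasis.repr x i := by
  have hsymm := isSymmetric_toEuclideanLin_iff.mpr hH
  have heig : toEuclideanLin H (hH.eigenvectorBasis i) =
      (hH.eigenvalues i : 𝕜) • hH.eigenvectorBasis i := by
    ext j
    simp [toLpLin_apply, hH.mulVec_eigenvectorBasis, RCLike.real_smul_eq_coe_mul]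
  rw [OrthonormalBasis.repr_apply_apply, OrthonormalBasis.repr_apply_apply, ← hsymm, heig,
    inner_smul_left, RCLike.conj_ofReal]

theorem re_inner_toEuclideanLin_self (x : EuclideanSpace 𝕜 ι) :
    RCLike.re ⟪x, toEuclideanLin H x⟫_𝕜 =
      ∑ i, hH.eigenvalues i * ‖hH.eigenvectorBasis.repr x i‖ ^ 2 := by
  rw [← hH.eigenvectorBasis.repr.inner_map_map, PiLp.inner_apply, map_sum]
  refine Finset.sum_congr rfl fun i _ => ?_
  rw [repr_toEuclideanLin, RCLike.inner_apply, mul_assoc, RCLike.mul_conj, ← RCLike.ofReal_pow,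
    ← RCLike.ofReal_mul, RCLike.ofReal_re]

variable {p : ι → Prop} {c : ℝ} {x : EuclideanSpace 𝕜 ι}

theorem mul_norm_sq_le_re_inner_of_mem_span (hp : ∀ i, p i → c ≤ hH.eigenvalues i)
    (hx : x ∈ Submodule.span 𝕜 (Set.range fun i : Subtype p => hH.eigenvectorBasis i)) :
    c * ‖x‖ ^ 2 ≤ RCLike.re ⟪x, toEuclideanLin H x⟫_𝕜 := by
  rw [hH.eigenvectorBasis.norm_sq_eq_sum, Finset.mul_sum, re_inner_toEuclideanLin_self]
  refine Finset.sum_le_sum fun i _ => ?_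
  by_cases hi : p i
  · gcongr
    exact hp i hi
  · simp [hH.eigenvectorBasis.repr_eq_zero_of_mem_span_range_subtype p hx hi]

theorem re_inner_le_mul_norm_sq_of_mem_span (hp : ∀ i, p i → hH.eigenvalues i ≤ c)
    (hx : x ∈ Submodule.span 𝕜 (Set.range fun i : Subtype p => hH.eigenvectorBasis i)) :
    RCLike.re ⟪x, toEuclideanLin H x⟫_𝕜 ≤ c * ‖x‖ ^ 2 := by
  rw [hH.eigenvectorBasis.norm_sq_eq_sum, Finset.mul_sum, re_inner_toEuclideanLin_self]
  refine Finset.sum_le_sum fun i _ => ?_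
  by_cases hi : p i
  · gcongr
    exact hp i hi
  · simp [hH.eigenvectorBasis.repr_eq_zero_of_mem_span_range_subtype p hx hi]

end

variable {𝕜 : Type*} [RCLike 𝕜] {n : ℕ} {H : Matrix (Fin n) (Fin n) 𝕜} (hH : H.IsHermitian)
  {k : ℕ}

theorem exists_subspace_kthLargest_mul_le_re_inner (hk : 1 ≤ k) (hkn : k ≤ n) :
    ∃ S : Submodule 𝕜 (EuclideanSpace 𝕜 (Fin n)), k ≤ Module.finrank 𝕜 S ∧
      ∀ x ∈ S, kthLargest hH.eigenvalues k * ‖x‖ ^ 2 ≤ RCLike.re ⟪x, toEuclideanLin H x⟫_𝕜 := by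
  refine ⟨_, ?_, fun x => hH.mul_norm_sq_le_re_inner_of_mem_span
    (p := fun i => kthLargest hH.eigenvalues k ≤ hH.eigenvalues i) fun i hi => hi⟩
  rw [OrthonormalBasis.finrank_span_range_subtype, Fintype.card_subtype]
  exact le_card_filter_kthLargest_le _ hk hkn

theorem exists_subspace_re_inner_le_kthLargest_mul (hk : 1 ≤ k) :
    ∃ T : Submodule 𝕜 (EuclideanSpace 𝕜 (Fin n)), n < Module.finrank 𝕜 T + k ∧
      ∀ x ∈ T, RCLike.re ⟪x, toEuclideanLin H x⟫_𝕜 ≤ kthLargest hH.eigenvalues k * ‖x‖ ^ 2 := by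
  refine ⟨_, ?_, fun x => hH.re_inner_le_mul_norm_sq_of_mem_span
    (p := fun i => hH.eigenvalues i ≤ kthLargest hH.eigenvalues k) fun i hi => hi⟩
  rw [OrthonormalBasis.finrank_span_range_subtype, Fintype.card_subtype]
  have hsplit := Finset.card_filter_add_card_filter_not (s := Finset.univ)
    fun i => hH.eigenvalues i ≤ kthLargest hH.eigenvalues k
  simp only [not_le, Finset.card_univ, Fintype.card_fin] at hsplit
  have := card_filter_kthLargest_lt_lt hH.eigenvalues hk
  omega

end Matrix.IsHermitian

theorem Submodule.exists_ne_zero_mem_inf_inf {K V : Type*} [DivisionRing K] [AddCommGroup V]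
    [Module K V] [FiniteDimensional K V] {U W X : Submodule K V}
    (h : 2 * Module.finrank K V < Module.finrank K U + Module.finrank K W + Module.finrank K X) :
    ∃ x ∈ U ⊓ (W ⊓ X), x ≠ 0 := by
  have hWX := Submodule.finrank_sup_add_finrank_inf_eq W X
  have hUWX := Submodule.finrank_sup_add_finrank_inf_eq U (W ⊓ X)
  have := Submodule.finrank_le (W ⊔ X)
  have := Submodule.finrank_le (U ⊔ W ⊓ X)
  apply Submodule.exists_mem_ne_zero_of_ne_bot
  intro hbot
  rw [hbot, finrank_bot] at hUWX
  omega

theorem Matrix.norm_toEuclideanLin_sq {𝕜 m n : Type*} [RCLike 𝕜] [Fintype m] [Fintype n]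
    [DecidableEq m] [DecidableEq n] (M : Matrix m n 𝕜) (x : EuclideanSpace 𝕜 n) :
    ‖toEuclideanLin M x‖ ^ 2 = RCLike.re ⟪x, toEuclideanLin (Mᴴ * M) x⟫_𝕜 := by
  rw [toLpLin_mul_same, LinearMap.comp_apply, toEuclideanLin_conjTranspose_eq_adjoint,
    LinearMap.adjoint_inner_right, inner_self_eq_norm_sq]

section singularValues

variable {p n : ℕ} (M : Matrix (Fin p) (Fin n) ℂ) {k : ℕ}

theorem sv_nonneg : 0 ≤ sv M k :=
  Real.sqrt_nonneg _

theorem sv_eq_zero_of_lt (hk : n < k) : sv M k = 0 := by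
  rw [sv, kthLargest_eq_zero_of_lt _ hk, Real.sqrt_zero]

theorem exists_subspace_sv_mul_le_norm (hk : 1 ≤ k) (hkn : k ≤ n) :
    ∃ S : Submodule ℂ (EuclideanSpace ℂ (Fin n)), k ≤ Module.finrank ℂ S ∧
      ∀ x ∈ S, sv M k * ‖x‖ ≤ ‖Matrix.toEuclideanLin M x‖ := by
  obtain ⟨S, hS, hle⟩ :=
    (Matrix.isHermitian_conjTranspose_mul_self M).exists_subspace_kthLargest_mul_le_re_inner hk hkn
  refine ⟨S, hS, fun x hx => ?_⟩
  have := Real.sqrt_le_sqrt ((hle x hx).trans_eq (M.norm_toEuclideanLin_sq x).symm)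
  rwa [Real.sqrt_mul' _ (by positivity), Real.sqrt_sq (norm_nonneg _),
    Real.sqrt_sq (norm_nonneg _)] at this

theorem exists_subspace_norm_le_sv_mul (hk : 1 ≤ k) :
    ∃ T : Submodule ℂ (EuclideanSpace ℂ (Fin n)), n < Module.finrank ℂ T + k ∧
      ∀ x ∈ T, ‖Matrix.toEuclideanLin M x‖ ≤ sv M k * ‖x‖ := by
  obtain ⟨T, hT, hle⟩ :=
    (Matrix.isHermitian_conjTranspose_mul_self M).exists_subspace_re_inner_le_kthLargest_mul hk
  refine ⟨T, hT, fun x hx => ?_⟩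
  have := Real.sqrt_le_sqrt ((M.norm_toEuclideanLin_sq x).trans_le (hle x hx))
  rwa [Real.sqrt_mul' _ (by positivity), Real.sqrt_sq (norm_nonneg _),
    Real.sqrt_sq (norm_nonneg _)] at this

end singularValues

/-- Ky Fan type inequality `s_{i+j+1}(A+B) ≤ s_{i+1}(A) + s_{j+1}(B)`. -/
theorem stmt2 {p n : ℕ} (A B : Matrix (Fin p) (Fin n) ℂ) (i j : ℕ) :
    sv (A + B) (i + j + 1) ≤ sv A (i + 1) + sv B (j + 1) := by
  rcases lt_or_ge n (i + j + 1) with hn | hn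
  · rw [sv_eq_zero_of_lt _ hn]
    exact add_nonneg (sv_nonneg A) (sv_nonneg B)
  obtain ⟨S, hS, hSle⟩ := exists_subspace_sv_mul_le_norm (A + B) (by omega) hn
  obtain ⟨TA, hTA, hTAle⟩ := exists_subspace_norm_le_sv_mul A (by omega : 1 ≤ i + 1)
  obtain ⟨TB, hTB, hTBle⟩ := exists_subspace_norm_le_sv_mul B (by omega : 1 ≤ j + 1)
  obtain ⟨x, ⟨hxS, hxA, hxB⟩, hx0⟩ := Submodule.exists_ne_zero_mem_inf_inf (U := S) (W := TA)
    (X := TB) (by rw [finrank_euclideanSpace_fin]; omega)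
  refine le_of_mul_le_mul_right ?_ (norm_pos_iff.mpr hx0)
  calc sv (A + B) (i + j + 1) * ‖x‖
      ≤ ‖Matrix.toEuclideanLin A x + Matrix.toEuclideanLin B x‖ := by
        simpa only [map_add, LinearMap.add_apply] using hSle x hxS
    _ ≤ ‖Matrix.toEuclideanLin A x‖ + ‖Matrix.toEuclideanLin B x‖ := norm_add_le _ _
    _ ≤ sv A (i + 1) * ‖x‖ + sv B (j + 1) * ‖x‖ := add_le_add (hTAle x hxA) (hTBle x hxB)
    _ = (sv A (i + 1) + sv B (j + 1)) * ‖x‖ := by ring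
end

section
/- Let N and H be p×p Hermitian matrices and M = N + H. If indices satisfy r + s − 1 ≤ i and i ≤ j + k − p, then λ_j(N) + λ_k(H) ≤ λ_i(M) ≤ λ_r(N) + λ_s(H), where λ_1 ≥ λ_2 ≥ ... ≥ λ_p denote eigenvalues in decreasing order. -/
/-! For a Hermitian `A`, the eigenvectors of its `k` largest eigenvalues span a `k`-dimensional
space on which `re ⟪x, A x⟫ ≥ λ_k(A) ‖x‖²`, and those of its `p + 1 - k` smallest eigenvalues
span one on which `re ⟪x, A x⟫ ≤ λ_k(A) ‖x‖²`. For either inequality, take the appropriate such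
space for each of `M`, `N`, `H`: the index conditions say that their dimensions add up to more
than `2p`, so they share a nonzero vector `x`, and `⟪x, M x⟫ = ⟪x, N x⟫ + ⟪x, H x⟫`. -/

open scoped BigOperators

open Finset Matrix Module

section KthLargest

variable {m : ℕ} (v : Fin m → ℝ) {k : ℕ}

theorem kthLargest_eq_sort (hk : 1 ≤ k) (hkm : k ≤ m) :
    kthLargest v k = v (Tuple.sort v ⟨m - k, by omega⟩) := by
  set σ := Tuple.sort v
  set a : Fin m := ⟨m - k, by omega⟩
  have ha : (a : ℕ) = m - k := rfl
  have hmono : Monotone (v ∘ σ) := Tuple.monotone_sort v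
  have hcard (t : ℝ) : #{i | t ≤ v (σ i)} = #{i | t ≤ v i} := card_equiv σ (by simp)
  refine IsGreatest.csSup_eq ⟨?_, fun t ht => ?_⟩
  · show k ≤ #{i | v (σ a) ≤ v i}
    rw [← hcard]
    calc k = #(Ici a) := by rw [Fin.card_Ici]; omega
      _ ≤ _ := card_le_card fun i hi => by simpa using hmono (mem_Ici.mp hi)
  · by_contra! hlt
    have hsub : ({i | t ≤ v (σ i)} : Finset (Fin m)) ⊆ Ioi a := fun i hi => by
      simp only [mem_filter, mem_univ, true_and, mem_Ioi] at hi ⊢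
      by_contra! hia
      exact (hlt.trans_le hi).not_ge (hmono hia)
    have := ht.trans ((hcard t).symm.trans_le (card_le_card hsub))
    rw [Fin.card_Ioi] at this
    omega

theorem exists_card_eq_forall_kthLargest_le (hk : 1 ≤ k) (hkm : k ≤ m) :
    ∃ S : Finset (Fin m), #S = k ∧ ∀ i ∈ S, kthLargest v k ≤ v i := by
  refine ⟨(Ici ⟨m - k, by omega⟩).map (Tuple.sort v).toEmbedding,
    by simp only [card_map, Fin.card_Ici]; omega, ?_⟩
  simp only [mem_map_equiv, mem_Ici, kthLargest_eq_sort v hk hkm]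
  intro i hi
  simpa using Tuple.monotone_sort v hi

theorem exists_card_eq_forall_le_kthLargest (hk : 1 ≤ k) (hkm : k ≤ m) :
    ∃ S : Finset (Fin m), #S = m + 1 - k ∧ ∀ i ∈ S, v i ≤ kthLargest v k := by
  refine ⟨(Iic ⟨m - k, by omega⟩).map (Tuple.sort v).toEmbedding,
    by simp only [card_map, Fin.card_Iic]; omega, ?_⟩
  simp only [mem_map_equiv, mem_Iic, kthLargest_eq_sort v hk hkm]
  intro i hi
  simpa using Tuple.monotone_sort v hi

end KthLargest

theorem Submodule.finrank_add_finrank_le_finrank_inf_add {K V : Type*} [DivisionRing K]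
    [AddCommGroup V] [Module K V] [FiniteDimensional K V] (U W : Submodule K V) :
    finrank K U + finrank K W ≤ finrank K ↥(U ⊓ W) + finrank K V := by
  rw [← Submodule.finrank_sup_add_finrank_inf_eq, add_comm]
  exact Nat.add_le_add_left (Submodule.finrank_le _) _

theorem Submodule.exists_ne_zero_mem_of_two_mul_finrank_lt {K V : Type*} [DivisionRing K]
    [AddCommGroup V] [Module K V] [FiniteDimensional K V] (U₁ U₂ U₃ : Submodule K V)
    (h : 2 * finrank K V < finrank K U₁ + finrank K U₂ + finrank K U₃) :
    ∃ x ≠ (0 : V), x ∈ U₁ ∧ x ∈ U₂ ∧ x ∈ U₃ := by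
  have h₁₂ := U₁.finrank_add_finrank_le_finrank_inf_add U₂
  have h₁₂₃ := (U₁ ⊓ U₂).finrank_add_finrank_le_finrank_inf_add U₃
  have hne : U₁ ⊓ U₂ ⊓ U₃ ≠ ⊥ := fun hbot => by
    rw [hbot, finrank_bot] at h₁₂₃
    omega
  obtain ⟨x, ⟨⟨hx₁, hx₂⟩, hx₃⟩, hx⟩ := Submodule.exists_mem_ne_zero_of_ne_bot hne
  exact ⟨x, hx, hx₁, hx₂, hx₃⟩

section Rayleigh

variable {𝕜 E ι : Type*} [RCLike 𝕜] [NormedAddCommGroup E] [InnerProductSpace 𝕜 E] [Fintype ι]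

theorem OrthonormalBasis.repr_eq_zero_of_mem_span_image (b : OrthonormalBasis ι 𝕜 E) {S : Set ι}
    {x : E} (hx : x ∈ Submodule.span 𝕜 (b '' S)) {i : ι} (hi : i ∉ S) : b.repr x i = 0 := by
  have hperp : Submodule.span 𝕜 (b '' S) ≤ (𝕜 ∙ b i)ᗮ := by
    rw [Submodule.span_le]
    rintro _ ⟨j, hj, rfl⟩
    exact Submodule.mem_orthogonal_singleton_iff_inner_right.mpr
      (b.orthonormal.2 fun h => hi (h ▸ hj))
  rw [b.repr_apply_apply, ← Submodule.mem_orthogonal_singleton_iff_inner_right]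
  exact hperp hx

theorem OrthonormalBasis.finrank_span_image (b : OrthonormalBasis ι 𝕜 E) (S : Finset ι) :
    finrank 𝕜 (Submodule.span 𝕜 (b '' S)) = #S := by
  rw [Set.image_eq_range]
  exact (finrank_span_eq_card (b.orthonormal.linearIndependent.comp _ Subtype.val_injective)).trans
    (Fintype.card_coe S)

variable {b : OrthonormalBasis ι 𝕜 E} {μ : ι → ℝ} {T : E →ₗ[𝕜] E}

theorem re_inner_apply_self_eq_sum (hT : ∀ i, T (b i) = (μ i : 𝕜) • b i) (x : E) :
    RCLike.re (inner 𝕜 x (T x)) = ∑ i, μ i * ‖b.repr x i‖ ^ 2 := by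
  have hTx : T x = ∑ i, (μ i * b.repr x i) • b i := by
    conv_lhs => rw [← b.sum_repr x]
    simp only [map_sum, map_smul, hT, smul_smul, mul_comm]
  have hx (i : ι) : inner 𝕜 x (b i) = starRingEnd 𝕜 (b.repr x i) := by
    rw [b.repr_apply_apply, inner_conj_symm]
  simp only [hTx, inner_sum, inner_smul_right, hx, mul_assoc, RCLike.mul_conj, map_sum]
  norm_cast

theorem mul_norm_sq_le_re_inner_apply_self (hT : ∀ i, T (b i) = (μ i : 𝕜) • b i) {S : Set ι}
    {c : ℝ} (hc : ∀ i ∈ S, c ≤ μ i) {x : E} (hx : x ∈ Submodule.span 𝕜 (b '' S)) :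
    c * ‖x‖ ^ 2 ≤ RCLike.re (inner 𝕜 x (T x)) := by
  rw [re_inner_apply_self_eq_sum hT, ← b.repr.norm_map, EuclideanSpace.norm_sq_eq, mul_sum]
  refine sum_le_sum fun i _ => ?_
  by_cases hi : i ∈ S
  · exact mul_le_mul_of_nonneg_right (hc i hi) (sq_nonneg _)
  · simp [b.repr_eq_zero_of_mem_span_image hx hi]

theorem re_inner_apply_self_le_mul_norm_sq (hT : ∀ i, T (b i) = (μ i : 𝕜) • b i) {S : Set ι}
    {c : ℝ} (hc : ∀ i ∈ S, μ i ≤ c) {x : E} (hx : x ∈ Submodule.span 𝕜 (b '' S)) :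
    RCLike.re (inner 𝕜 x (T x)) ≤ c * ‖x‖ ^ 2 := by
  have hnegT (i : ι) : (-T) (b i) = ((-μ i : ℝ) : 𝕜) • b i := by simp [hT]
  have := mul_norm_sq_le_re_inner_apply_self hnegT (c := -c)
    (fun i hi => neg_le_neg (hc i hi)) hx
  simp only [LinearMap.neg_apply, inner_neg_right, map_neg] at this
  linarith

end Rayleigh

section Hermitian

variable {𝕜 : Type*} [RCLike 𝕜]

theorem Matrix.IsHermitian.toEuclideanLin_eigenvectorBasis {n : Type*} [Fintype n] [DecidableEq n]
    {A : Matrix n n 𝕜} (hA : A.IsHermitian) (i : n) :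
    toEuclideanLin A (hA.eigenvectorBasis i) = (hA.eigenvalues i : 𝕜) • hA.eigenvectorBasis i := by
  apply WithLp.ofLp_injective
  rw [Matrix.toLpLin_apply, WithLp.ofLp_toLp, hA.mulVec_eigenvectorBasis, WithLp.ofLp_smul,
    RCLike.real_smul_eq_coe_smul (K := 𝕜)]

variable {p k : ℕ} {A : Matrix (Fin p) (Fin p) 𝕜}

theorem Matrix.IsHermitian.exists_finrank_eq_eigH_mul_le (hA : A.IsHermitian) (hk : 1 ≤ k)
    (hkp : k ≤ p) : ∃ V : Submodule 𝕜 (EuclideanSpace 𝕜 (Fin p)), finrank 𝕜 V = k ∧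
      ∀ x ∈ V, eigH A k * ‖x‖ ^ 2 ≤ RCLike.re (inner 𝕜 x (toEuclideanLin A x)) := by
  obtain ⟨S, hS, hle⟩ := exists_card_eq_forall_kthLargest_le hA.eigenvalues hk hkp
  refine ⟨Submodule.span 𝕜 (hA.eigenvectorBasis '' S),
    by rw [OrthonormalBasis.finrank_span_image, hS], fun x hx => ?_⟩
  rw [eigH, dif_pos hA]
  exact mul_norm_sq_le_re_inner_apply_self hA.toEuclideanLin_eigenvectorBasis hle hx

theorem Matrix.IsHermitian.exists_finrank_eq_le_eigH_mul (hA : A.IsHermitian) (hk : 1 ≤ k)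
    (hkp : k ≤ p) : ∃ V : Submodule 𝕜 (EuclideanSpace 𝕜 (Fin p)), finrank 𝕜 V = p + 1 - k ∧
      ∀ x ∈ V, RCLike.re (inner 𝕜 x (toEuclideanLin A x)) ≤ eigH A k * ‖x‖ ^ 2 := by
  obtain ⟨S, hS, hle⟩ := exists_card_eq_forall_le_kthLargest hA.eigenvalues hk hkp
  refine ⟨Submodule.span 𝕜 (hA.eigenvectorBasis '' S),
    by rw [OrthonormalBasis.finrank_span_image, hS], fun x hx => ?_⟩
  rw [eigH, dif_pos hA]
  exact re_inner_apply_self_le_mul_norm_sq hA.toEuclideanLin_eigenvectorBasis hle hx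

theorem Matrix.re_inner_toEuclideanLin_add_apply (N H : Matrix (Fin p) (Fin p) 𝕜)
    (x : EuclideanSpace 𝕜 (Fin p)) :
    RCLike.re (inner 𝕜 x (toEuclideanLin (N + H) x)) =
      RCLike.re (inner 𝕜 x (toEuclideanLin N x)) + RCLike.re (inner 𝕜 x (toEuclideanLin H x)) := by
  rw [map_add, LinearMap.add_apply, inner_add_right, map_add]

variable {N H : Matrix (Fin p) (Fin p) 𝕜} {i j r s : ℕ}

theorem eigH_add_eigH_le_eigH_add (hN : N.IsHermitian) (hH : H.IsHermitian) (hi : 1 ≤ i)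
    (hjp : j ≤ p) (hkp : k ≤ p) (h : i + p ≤ j + k) :
    eigH N j + eigH H k ≤ eigH (N + H) i := by
  obtain ⟨V₁, hV₁, hM⟩ := (hN.add hH).exists_finrank_eq_le_eigH_mul hi (by omega)
  obtain ⟨V₂, hV₂, hN'⟩ := hN.exists_finrank_eq_eigH_mul_le (by omega) hjp
  obtain ⟨V₃, hV₃, hH'⟩ := hH.exists_finrank_eq_eigH_mul_le (by omega) hkp
  obtain ⟨x, hx, hx₁, hx₂, hx₃⟩ := Submodule.exists_ne_zero_mem_of_two_mul_finrank_lt V₁ V₂ V₃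
    (by rw [finrank_euclideanSpace_fin]; omega)
  have := re_inner_toEuclideanLin_add_apply N H x
  refine le_of_mul_le_mul_right ?_ (pow_pos (norm_pos_iff.mpr hx) 2)
  linarith [hM x hx₁, hN' x hx₂, hH' x hx₃]

theorem eigH_add_le_eigH_add_eigH (hN : N.IsHermitian) (hH : H.IsHermitian) (hr : 1 ≤ r)
    (hs : 1 ≤ s) (hip : i ≤ p) (h : r + s ≤ i + 1) :
    eigH (N + H) i ≤ eigH N r + eigH H s := by
  obtain ⟨V₁, hV₁, hM⟩ := (hN.add hH).exists_finrank_eq_eigH_mul_le (by omega) hip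
  obtain ⟨V₂, hV₂, hN'⟩ := hN.exists_finrank_eq_le_eigH_mul hr (by omega)
  obtain ⟨V₃, hV₃, hH'⟩ := hH.exists_finrank_eq_le_eigH_mul hs (by omega)
  obtain ⟨x, hx, hx₁, hx₂, hx₃⟩ := Submodule.exists_ne_zero_mem_of_two_mul_finrank_lt V₁ V₂ V₃
    (by rw [finrank_euclideanSpace_fin]; omega)
  have := re_inner_toEuclideanLin_add_apply N H x
  refine le_of_mul_le_mul_right ?_ (pow_pos (norm_pos_iff.mpr hx) 2)
  linarith [hM x hx₁, hN' x hx₂, hH' x hx₃]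

end Hermitian

/-- `r + s ≤ i + 1` and `i + p ≤ j + k` are the conditions `r + s − 1 ≤ i` and `i ≤ j + k − p`
without truncated subtraction. -/
theorem stmt5_general {p : ℕ} (N H : Matrix (Fin p) (Fin p) ℂ)
    (hN : N.IsHermitian) (hH : H.IsHermitian)
    (i j k r s : ℕ) (hi : 1 ≤ i) (hip : i ≤ p) (hjp : j ≤ p)
    (hkp : k ≤ p) (hr : 1 ≤ r) (hs : 1 ≤ s)
    (hrs : r + s ≤ i + 1) (hjk : i + p ≤ j + k) :
    eigH N j + eigH H k ≤ eigH (N + H) i ∧ eigH (N + H) i ≤ eigH N r + eigH H s :=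
  ⟨eigH_add_eigH_le_eigH_add hN hH hi hjp hkp hjk, eigH_add_le_eigH_add_eigH hN hH hr hs hip hrs⟩

/-- Weyl's inequalities. Indices are 1-based; the conditions `r+s−1 ≤ i` and
`i ≤ j+k−p` are stated subtraction-free as `r+s ≤ i+1` and `i+p ≤ j+k`. -/
theorem stmt5 {p : ℕ} (N H : Matrix (Fin p) (Fin p) ℂ)
    (hN : N.IsHermitian) (hH : H.IsHermitian)
    (i j k r s : ℕ) (hi : 1 ≤ i) (hip : i ≤ p) (hj : 1 ≤ j) (hjp : j ≤ p)
    (hk : 1 ≤ k) (hkp : k ≤ p) (hr : 1 ≤ r) (hrp : r ≤ p) (hs : 1 ≤ s) (hsp : s ≤ p)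
    (hrs : r + s ≤ i + 1) (hjk : i + p ≤ j + k) :
    eigH N j + eigH H k ≤ eigH (N + H) i ∧ eigH (N + H) i ≤ eigH N r + eigH H s :=
  stmt5_general N H hN hH i j k r s hi hip hjp hkp hr hs hrs hjk
end

section
/- Let (λ_1^{(p)} ≥ λ_2^{(p)} ≥ ... ≥ λ_p^{(p)}) be the eigenvalues of a p×p sample correlation matrix, and suppose: (i) for each k ≤ r, liminf_{p→∞} λ_k^{(p)} / log p > 1, and (ii) limsup_{p→∞} λ_{r+1}^{(p)} < ∞. Define BS(p) as the largest m such that λ_i^{(p)} > Σ_{j=i}^p 1/j for all i = 1,...,m (and 0 if λ_1^{(p)} ≤ Σ_{j=1}^p 1/j). Then BS(p) = r for all sufficiently large p. -/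
open scoped BigOperators
open Matrix

open Filter

/-- The broken-stick rule: the largest `m ≤ p` such that the `i`-th largest eigenvalue exceeds
the tail harmonic sum `Σ_{j=i}^p 1/j` for all `i = 1,…,m` (and `0` if already `λ_1` fails). -/
noncomputable def brokenStick (lam : ℕ → ℝ) (p : ℕ) : ℕ :=
  sSup {m : ℕ | m ≤ p ∧ ∀ i, 1 ≤ i → i ≤ m → (∑ j ∈ Finset.Icc i p, (1 : ℝ) / j) < lam i}

/-! The tail sums satisfy `log (p + 1) - H_{r} ≤ H_p(r + 1)` and `H_p(i) ≤ H_p ≤ 1 + log p`.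
Hence an eigenvalue eventually above `c log p` with `c > 1` passes the test for every large `p`,
while a bounded `λ_{r+1}` eventually fails it. -/

lemma sum_Icc_one_div_eq_harmonic (p : ℕ) :
    ∑ j ∈ Finset.Icc 1 p, (1 : ℝ) / j = harmonic p := by
  simp [harmonic_eq_sum_Icc, one_div]

lemma sum_Icc_one_div_le_one_add_log {i : ℕ} (hi : 1 ≤ i) (p : ℕ) :
    ∑ j ∈ Finset.Icc i p, (1 : ℝ) / j ≤ 1 + Real.log p :=
  calc ∑ j ∈ Finset.Icc i p, (1 : ℝ) / j
      ≤ ∑ j ∈ Finset.Icc 1 p, (1 : ℝ) / j :=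
        Finset.sum_le_sum_of_subset_of_nonneg (Finset.Icc_subset_Icc_left hi)
          fun _ _ _ ↦ by positivity
    _ = harmonic p := sum_Icc_one_div_eq_harmonic p
    _ ≤ 1 + Real.log p := harmonic_le_one_add_log p

lemma log_add_one_sub_harmonic_le_sum_Icc {r p : ℕ} (hrp : r ≤ p) :
    Real.log (p + 1) - harmonic r ≤ ∑ j ∈ Finset.Icc (r + 1) p, (1 : ℝ) / j := by
  have hsplit := Finset.sum_Ioc_consecutive (fun j : ℕ ↦ (1 : ℝ) / j) r.zero_le hrp
  simp only [← Finset.Icc_add_one_left_eq_Ioc, zero_add, sum_Icc_one_div_eq_harmonic] at hsplit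
  have := log_add_one_le_harmonic p
  push_cast at this
  linarith

-- In `ℝ`, `sSup ∅ = 0`: a liminf with no eventual lower bound is the junk value `0`.
lemma Filter.isBoundedUnder_ge_of_liminf_ne_zero {α : Type*} {l : Filter α} {u : α → ℝ}
    (h : liminf u l ≠ 0) : IsBoundedUnder (· ≥ ·) l u := by
  contrapose! h
  have hempty : {a | ∀ᶠ n in l, a ≤ u n} = ∅ :=
    Set.eq_empty_of_forall_notMem fun a ha ↦ h ⟨a, ha⟩
  rw [liminf_eq, hempty, Real.sSup_empty]

lemma eventually_one_add_log_lt_of_one_lt_liminf {u : ℕ → ℝ}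
    (h : 1 < liminf (fun p : ℕ ↦ u p / Real.log p) atTop) :
    ∀ᶠ p : ℕ in atTop, 1 + Real.log p < u p := by
  obtain ⟨c, hc1, hc⟩ := exists_between h
  have hlog : Tendsto (fun p : ℕ ↦ Real.log p) atTop atTop :=
    Real.tendsto_log_atTop.comp tendsto_natCast_atTop_atTop
  have hbdd : IsBoundedUnder (· ≥ ·) atTop fun p : ℕ ↦ u p / Real.log p :=
    isBoundedUnder_ge_of_liminf_ne_zero (by linarith)
  filter_upwards [eventually_lt_of_lt_liminf hc hbdd, hlog.eventually_gt_atTop (1 / (c - 1))]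
    with p hcu hp
  have hlog_pos : 0 < Real.log p := lt_trans (by have := sub_pos.2 hc1; positivity) hp
  have : 1 < (c - 1) * Real.log p := by rwa [div_lt_iff₀' (sub_pos.2 hc1)] at hp
  have : c * Real.log p < u p := (lt_div_iff₀ hlog_pos).1 hcu
  linarith

lemma brokenStick_eq_of_lt_of_le {lam : ℕ → ℝ} {p r : ℕ} (hrp : r ≤ p)
    (hpass : ∀ i, 1 ≤ i → i ≤ r → ∑ j ∈ Finset.Icc i p, (1 : ℝ) / j < lam i)
    (hfail : lam (r + 1) ≤ ∑ j ∈ Finset.Icc (r + 1) p, (1 : ℝ) / j) :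
    brokenStick lam p = r := by
  refine le_antisymm (csSup_le ⟨r, hrp, hpass⟩ fun m ⟨_, hm⟩ ↦ ?_)
    (le_csSup ⟨p, fun m hm ↦ hm.1⟩ ⟨hrp, hpass⟩)
  by_contra! hrm
  exact (hm (r + 1) (Nat.le_add_left 1 r) hrm).not_ge hfail

theorem stmt14_general (lam : ℕ → ℕ → ℝ) (r : ℕ)
    (hgrow : ∀ k, 1 ≤ k → k ≤ r →
      1 < Filter.liminf (fun p : ℕ => lam p k / Real.log p) atTop)
    (hbdd : ∃ M : ℝ, ∀ᶠ p : ℕ in atTop, lam p (r + 1) ≤ M) :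
    ∀ᶠ p : ℕ in atTop, brokenStick (lam p) p = r := by
  obtain ⟨M, hM⟩ := hbdd
  have hpass : ∀ᶠ p : ℕ in atTop, ∀ k ∈ Finset.Icc 1 r, 1 + Real.log p < lam p k := by
    refine (Filter.eventually_all_finset _).2 fun k hk ↦ ?_
    obtain ⟨h1k, hkr⟩ := Finset.mem_Icc.1 hk
    exact eventually_one_add_log_lt_of_one_lt_liminf (hgrow k h1k hkr)
  have hfail : ∀ᶠ p : ℕ in atTop, M + harmonic r < Real.log (p + 1) :=
    (Real.tendsto_log_atTop.comp
      (tendsto_natCast_atTop_atTop.atTop_add tendsto_const_nhds)).eventually_gt_atTop _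
  filter_upwards [hM, hpass, hfail, eventually_ge_atTop r] with p hM hpass hfail hrp
  refine brokenStick_eq_of_lt_of_le hrp (fun i h1i hir ↦ ?_) ?_
  · exact (sum_Icc_one_div_le_one_add_log h1i p).trans_lt
      (hpass i (Finset.mem_Icc.2 ⟨h1i, hir⟩))
  · linarith [log_add_one_sub_harmonic_le_sum_Icc (p := p) hrp]

/-- deterministic core of the broken-stick rule theorem: if the first `r`
eigenvalues grow faster than `log p` (liminf of ratio `> 1`) and the `(r+1)`-st stays bounded,
then the broken-stick rule equals `r` for all large `p`. -/
theorem stmt14 (lam : ℕ → ℕ → ℝ) (r : ℕ)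
    (hdec : ∀ p i j, 1 ≤ i → i ≤ j → lam p j ≤ lam p i)
    (hgrow : ∀ k, 1 ≤ k → k ≤ r →
      1 < Filter.liminf (fun p : ℕ => lam p k / Real.log p) atTop)
    (hbdd : ∃ M : ℝ, ∀ᶠ p : ℕ in atTop, lam p (r + 1) ≤ M) :
    ∀ᶠ p : ℕ in atTop, brokenStick (lam p) p = r :=
  stmt14_general lam r hgrow hbdd
end
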